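/- Let n ∈ {2,3,...} and α ∈ [1/n, 1]. Then for every r ≥ 0, E_α(r) ≤ E_{α,α}(r) + ∑_{k=0}^{⌊(3n-2)/2⌋ - 1} γ_k r^k, where γ_k := 1/Γ(1+αk) − 1/Γ(α+αk). -/

import Mathlib

/-!
Write `E_α(r) - E_{α,α}(r) = ∑ γ_k r^k`. For `k ≥ n` we have `αk ≥ 1`, and then
`Γ(α + αk) ≤ Γ(1 + αk)`: either both arguments lie in `[2, ∞)`, where `Γ` is increasing, or
`α + αk ∈ [1, 2]`, where `Γ ≤ 1 = Γ(2) ≤ Γ(1 + αk)` by convexity. Hence `γ_k ≤ 0` for `k ≥ n`,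
and since `⌊(3n-2)/2⌋ ≥ n` the tail of the series beyond the stated range is nonpositive.
Convergence of the series follows from the ratio test, using the log-convexity bound
`Γ(x + α) ≥ Γ(x) (x - 1)^α`.
-/

open Real Filter Topology

/-- The two-parameter Mittag-Leffler function `E_{α,β}(z) = ∑ z^n / Γ(αn+β)`. -/
noncomputable def ML (a b z : ℝ) : ℝ :=
  ∑' n : ℕ, z ^ n / Real.Gamma (a * n + b)

namespace Real

lemma Gamma_le_one_of_mem_Icc {x : ℝ} (hx : x ∈ Set.Icc 1 2) : Gamma x ≤ 1 := by
  simpa [Gamma_two] using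
    convexOn_Gamma.le_max_of_mem_Icc (Set.mem_Ioi.mpr one_pos) (Set.mem_Ioi.mpr two_pos) hx

lemma Gamma_le_Gamma_of_one_le_of_two_le {x y : ℝ} (hx : 1 ≤ x) (hxy : x ≤ y) (hy : 2 ≤ y) :
    Gamma x ≤ Gamma y := by
  have hmono := Gamma_strictMonoOn_Ici.monotoneOn
  rcases le_total x 2 with hx2 | hx2
  · calc Gamma x ≤ 1 := Gamma_le_one_of_mem_Icc ⟨hx, hx2⟩
      _ = Gamma 2 := Gamma_two.symm
      _ ≤ Gamma y := hmono Set.self_mem_Ici hy hy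
  · exact hmono hx2 (hx2.trans hxy) hxy

/-- By log-convexity, the slope of `log ∘ Γ` on `[x, x + a]` is at least its slope
`log (x - 1)` on `[x - 1, x]`. -/
lemma Gamma_mul_rpow_le_Gamma_add {x a : ℝ} (hx : 1 < x) (ha : 0 < a) :
    Gamma x * (x - 1) ^ a ≤ Gamma (x + a) := by
  have hx1 : 0 < x - 1 := sub_pos.mpr hx
  have hGx : 0 < Gamma x := Gamma_pos_of_pos (by linarith)
  have hGxa : 0 < Gamma (x + a) := Gamma_pos_of_pos (by linarith)
  have hlog : log (Gamma x) - log (Gamma (x - 1)) = log (x - 1) := by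
    have h := Gamma_add_one hx1.ne'
    rw [sub_add_cancel] at h
    rw [h, log_mul hx1.ne' (Gamma_pos_of_pos hx1).ne', add_sub_cancel_right]
  have hslope := convexOn_log_Gamma.slope_mono_adjacent (Set.mem_Ioi.mpr hx1)
    (Set.mem_Ioi.mpr (by linarith : 0 < x + a)) (sub_one_lt x) (lt_add_of_pos_right x ha)
  simp only [Function.comp_apply, sub_sub_cancel, div_one, add_sub_cancel_left, hlog,
    le_div_iff₀ ha] at hslope
  rw [← exp_log hGxa, ← exp_log hGx, rpow_def_of_pos hx1, ← exp_add, exp_le_exp]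
  linarith

lemma summable_pow_div_Gamma_mul_add {a : ℝ} (ha : 0 < a) (b z : ℝ) :
    Summable (fun k : ℕ => z ^ k / Gamma (a * k + b)) := by
  have harg : Tendsto (fun k : ℕ => a * k + b - 1) atTop atTop :=
    tendsto_atTop_add_const_right _ _ <| tendsto_atTop_add_const_right _ _ <|
      tendsto_natCast_atTop_atTop.const_mul_atTop ha
  refine summable_of_ratio_norm_eventually_le (r := 1 / 2) (by norm_num) ?_
  filter_upwards [harg.eventually_ge_atTop 1,
    ((tendsto_rpow_atTop ha).comp harg).eventually_ge_atTop (2 * |z|)] with k hk1 hkz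
  rw [Function.comp_apply] at hkz
  set x := a * k + b
  have hx : 1 < x := by linarith
  have hGx : 0 < Gamma x := Gamma_pos_of_pos (by linarith)
  have hGxa : 0 < Gamma (x + a) := Gamma_pos_of_pos (by linarith)
  have hgrowth : 2 * |z| * Gamma x ≤ Gamma (x + a) := by
    nlinarith [Gamma_mul_rpow_le_Gamma_add hx ha, mul_le_mul_of_nonneg_left hkz hGx.le]
  have hsucc : a * ((k + 1 : ℕ) : ℝ) + b = x + a := by push_cast; ring
  rw [hsucc, norm_div, norm_div, norm_pow, norm_pow, Real.norm_of_nonneg hGx.le,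
    Real.norm_of_nonneg hGxa.le, pow_succ, div_le_iff₀ hGxa]
  calc |z| ^ k * |z| = 1 / 2 * (|z| ^ k / Gamma x) * (2 * |z| * Gamma x) := by
        field_simp
    _ ≤ 1 / 2 * (|z| ^ k / Gamma x) * Gamma (x + a) := by gcongr

lemma one_div_Gamma_one_add_le {α t : ℝ} (hα0 : 0 ≤ α) (hα1 : α ≤ 1) (ht : 1 ≤ t) :
    1 / Gamma (1 + t) ≤ 1 / Gamma (α + t) :=
  one_div_le_one_div_of_le (Gamma_pos_of_pos (by linarith))
    (Gamma_le_Gamma_of_one_le_of_two_le (by linarith) (by linarith) (by linarith))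

end Real

lemma tsum_le_sum_range_of_nonpos {f : ℕ → ℝ} (hf : Summable f) {K : ℕ}
    (h : ∀ k, K ≤ k → f k ≤ 0) : ∑' k, f k ≤ ∑ k ∈ Finset.range K, f k := by
  rw [← hf.sum_add_tsum_nat_add K]
  exact add_le_of_nonpos_right (tsum_nonpos fun j => h _ (Nat.le_add_left K j))

lemma hasSum_ML_sub_ML {a : ℝ} (ha : 0 < a) (b c z : ℝ) :
    HasSum (fun k : ℕ => (1 / Gamma (b + a * k) - 1 / Gamma (c + a * k)) * z ^ k)
      (ML a b z - ML a c z) := by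
  have hterm : ∀ k : ℕ, (1 / Gamma (b + a * k) - 1 / Gamma (c + a * k)) * z ^ k =
      z ^ k / Gamma (a * k + b) - z ^ k / Gamma (a * k + c) := fun k => by
    rw [add_comm b, add_comm c]
    ring
  simp only [hterm]
  exact (Real.summable_pow_div_Gamma_mul_add ha b z).hasSum.sub
    (Real.summable_pow_div_Gamma_mul_add ha c z).hasSum

theorem stmt4 (n : ℕ) (hn : 2 ≤ n) (α : ℝ) (hα1 : 1 / (n : ℝ) ≤ α) (hα2 : α ≤ 1)
    (r : ℝ) (hr : 0 ≤ r) :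
    ML α 1 r ≤ ML α α r + ∑ k ∈ Finset.range ((3 * n - 2) / 2),
      (1 / Real.Gamma (1 + α * k) - 1 / Real.Gamma (α + α * k)) * r ^ k := by
  have hn0 : (0 : ℝ) < n := Nat.cast_pos.mpr (by omega)
  have hα0 : 0 < α := (one_div_pos.mpr hn0).trans_le hα1
  have hcoeff_nonpos : ∀ k : ℕ, n ≤ k →
      (1 / Gamma (1 + α * k) - 1 / Gamma (α + α * k)) * r ^ k ≤ 0 := by
    intro k hk
    have hαk : 1 ≤ α * k :=
      calc (1 : ℝ) = 1 / n * n := by field_simp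
        _ ≤ α * k := by gcongr
    exact mul_nonpos_of_nonpos_of_nonneg
      (sub_nonpos.mpr (one_div_Gamma_one_add_le hα0.le hα2 hαk)) (pow_nonneg hr k)
  have hdiff := hasSum_ML_sub_ML hα0 1 α r
  have htail := tsum_le_sum_range_of_nonpos hdiff.summable
    (K := (3 * n - 2) / 2) fun k hk => hcoeff_nonpos k (by omega)
  rw [hdiff.tsum_eq] at htail
  linarith
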